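/- arXiv:2602.19310 — 2 statements merged into one kernel-verified Lean document; each statement's English description precedes it below -/
import Mathlib

section
/- Let M ∈ ℝ^{n×n} with n = n₁ + n₂ + n₃, and suppose its symmetric part M_s := (M + Mᵀ)/2 equals the block-diagonal matrix blockdiag(H_d, H_g, 0), where H_d ∈ ℝ^{n₁×n₁} and H_g ∈ ℝ^{n₂×n₂} are diagonal matrices with strictly positive diagonal entries. Then for any two solutions (z¹, π¹) and (z², π²) of the mixed linear complementarity problem MLCP(M, N, q, r), writing z = (z_d, z_g, z_rest) according to the block partition, one has z¹_d = z²_d and z¹_g = z²_g; that is, the first n₁ + n₂ components of the solution are unique. -/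
open Matrix

/-- A pair `(z, π)` is a solution of the mixed linear complementarity problem
`MLCP(M, N, q, r)`, over an arbitrary finite index type. -/
def IsMLCPSolution {ι : Type*} [Fintype ι] [DecidableEq ι] {m : ℕ}
    (M : Matrix ι ι ℝ) (N : Matrix ι (Fin m) ℝ) (q : ι → ℝ) (r : Fin m → ℝ)
    (z : ι → ℝ) (π : Fin m → ℝ) : Prop :=
  0 ≤ z ∧ 0 ≤ M.mulVec z + N.mulVec π + q ∧
    z ⬝ᵥ (M.mulVec z + N.mulVec π + q) = 0 ∧ N.transpose.mulVec z = r

/-- Suppose the symmetric part of `M` equals `blockdiag(H_d, H_g, 0)`, where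
`H_d` and `H_g` are diagonal matrices with strictly positive diagonal entries.
Then for any two solutions of `MLCP(M, N, q, r)`, the first `n₁ + n₂` blocks of
the `z` components coincide: `z¹_d = z²_d` and `z¹_g = z²_g`. -/
theorem mlcp_unique_demand_generation {n₁ n₂ n₃ m : ℕ}
    (M : Matrix (Fin n₁ ⊕ (Fin n₂ ⊕ Fin n₃)) (Fin n₁ ⊕ (Fin n₂ ⊕ Fin n₃)) ℝ)
    (N : Matrix (Fin n₁ ⊕ (Fin n₂ ⊕ Fin n₃)) (Fin m) ℝ)
    (q : Fin n₁ ⊕ (Fin n₂ ⊕ Fin n₃) → ℝ) (r : Fin m → ℝ)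
    (d : Fin n₁ → ℝ) (e : Fin n₂ → ℝ)
    (hd : ∀ i, 0 < d i) (he : ∀ i, 0 < e i)
    (hMs : (2 : ℝ)⁻¹ • (M + M.transpose) =
      Matrix.fromBlocks (Matrix.diagonal d) 0 0
        (Matrix.fromBlocks (Matrix.diagonal e) 0 0 0))
    (z₁ z₂ : Fin n₁ ⊕ (Fin n₂ ⊕ Fin n₃) → ℝ) (π₁ π₂ : Fin m → ℝ)
    (h₁ : IsMLCPSolution M N q r z₁ π₁) (h₂ : IsMLCPSolution M N q r z₂ π₂) :
    (∀ i : Fin n₁, z₁ (Sum.inl i) = z₂ (Sum.inl i)) ∧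
      (∀ i : Fin n₂, z₁ (Sum.inr (Sum.inl i)) = z₂ (Sum.inr (Sum.inl i))) := by
  obtain ⟨hz₁, hw₁, hc₁, hr₁⟩ := h₁
  obtain ⟨hz₂, hw₂, hc₂, hr₂⟩ := h₂
  set w₁ := M *ᵥ z₁ + N *ᵥ π₁ + q with hw1def
  set w₂ := M *ᵥ z₂ + N *ᵥ π₂ + q with hw2def
  set u := z₁ - z₂ with hudef
  have dotnn : ∀ (a b : Fin n₁ ⊕ (Fin n₂ ⊕ Fin n₃) → ℝ), 0 ≤ a → 0 ≤ b → 0 ≤ a ⬝ᵥ b := by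
    intro a b ha hb
    exact Finset.sum_nonneg fun i _ => mul_nonneg (ha i) (hb i)
  have hle : u ⬝ᵥ (w₁ - w₂) ≤ 0 := by
    have heq : u ⬝ᵥ (w₁ - w₂) = -(z₁ ⬝ᵥ w₂ + z₂ ⬝ᵥ w₁) := by
      rw [hudef, sub_dotProduct, dotProduct_sub, dotProduct_sub, hc₁, hc₂]
      ring
    rw [heq]
    have h1 := dotnn z₁ w₂ hz₁ hw₂
    have h2 := dotnn z₂ w₁ hz₂ hw₁
    linarith
  have hNu : Nᵀ *ᵥ u = 0 := by
    rw [hudef, mulVec_sub, hr₁, hr₂, sub_self]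
  have hsplit : u ⬝ᵥ (w₁ - w₂) = u ⬝ᵥ (M *ᵥ u) := by
    have hw : w₁ - w₂ = M *ᵥ u + N *ᵥ (π₁ - π₂) := by
      rw [hw1def, hw2def, hudef, mulVec_sub, mulVec_sub]
      abel
    rw [hw, dotProduct_add]
    have hz : u ⬝ᵥ (N *ᵥ (π₁ - π₂)) = 0 := by
      rw [dotProduct_mulVec, ← mulVec_transpose, hNu, zero_dotProduct]
    rw [hz, add_zero]
  have hQ : u ⬝ᵥ (M *ᵥ u) ≤ 0 := hsplit ▸ hle
  have hMt : u ⬝ᵥ (Mᵀ *ᵥ u) = u ⬝ᵥ (M *ᵥ u) := by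
    rw [mulVec_transpose, dotProduct_comm, ← dotProduct_mulVec]
  have hQs : u ⬝ᵥ (((2 : ℝ)⁻¹ • (M + Mᵀ)) *ᵥ u) = u ⬝ᵥ (M *ᵥ u) := by
    rw [smul_mulVec, dotProduct_smul, add_mulVec, dotProduct_add, hMt, smul_eq_mul]
    ring
  have key : u ⬝ᵥ ((Matrix.fromBlocks (Matrix.diagonal d) 0 0
      (Matrix.fromBlocks (Matrix.diagonal e) 0 0 0)) *ᵥ u)
      = (∑ i, d i * (u (Sum.inl i)) ^ 2) + ∑ j, e j * (u (Sum.inr (Sum.inl j))) ^ 2 := by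
    have hBv : (Matrix.fromBlocks (Matrix.diagonal d) 0 0
        (Matrix.fromBlocks (Matrix.diagonal e) 0 0 0)) *ᵥ u
        = (Sum.elim (fun i => d i * u (Sum.inl i))
            (Sum.elim (fun j => e j * u (Sum.inr (Sum.inl j))) 0) :
              Fin n₁ ⊕ (Fin n₂ ⊕ Fin n₃) → ℝ) := by
      funext x
      rcases x with i | (j | k) <;>
        simp [mulVec, dotProduct, Fintype.sum_sum_type, diagonal_apply, ite_mul,
          Finset.sum_ite_eq, fromBlocks]
    rw [hBv]
    simp only [dotProduct, Fintype.sum_sum_type, Sum.elim_inl, Sum.elim_inr, Pi.zero_apply,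
      mul_zero, Finset.sum_const_zero, add_zero]
    congr 1 <;> exact Finset.sum_congr rfl fun i _ => by ring
  have hsum : (∑ i, d i * (u (Sum.inl i)) ^ 2) + ∑ j, e j * (u (Sum.inr (Sum.inl j))) ^ 2 ≤ 0 := by
    rw [← key, ← hMs, hQs]; exact hQ
  have hd' : ∀ i ∈ Finset.univ, 0 ≤ d i * (u (Sum.inl i)) ^ 2 :=
    fun i _ => mul_nonneg (hd i).le (sq_nonneg _)
  have he' : ∀ j ∈ Finset.univ, 0 ≤ e j * (u (Sum.inr (Sum.inl j))) ^ 2 :=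
    fun j _ => mul_nonneg (he j).le (sq_nonneg _)
  have hs1 : (∑ i, d i * (u (Sum.inl i)) ^ 2) = 0 := by
    have := Finset.sum_nonneg hd'
    have := Finset.sum_nonneg he'
    linarith
  have hs2 : (∑ j, e j * (u (Sum.inr (Sum.inl j))) ^ 2) = 0 := by
    have := Finset.sum_nonneg hd'
    have := Finset.sum_nonneg he'
    linarith
  constructor
  · intro i
    have h0 := (Finset.sum_eq_zero_iff_of_nonneg hd').mp hs1 i (Finset.mem_univ i)
    have : (u (Sum.inl i)) ^ 2 = 0 := by
      rcases mul_eq_zero.mp h0 with h | h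
      · exact absurd h (hd i).ne'
      · exact h
    have hu0 : u (Sum.inl i) = 0 := pow_eq_zero_iff (by norm_num) |>.mp this
    have : z₁ (Sum.inl i) - z₂ (Sum.inl i) = 0 := hu0
    linarith
  · intro j
    have h0 := (Finset.sum_eq_zero_iff_of_nonneg he').mp hs2 j (Finset.mem_univ j)
    have : (u (Sum.inr (Sum.inl j))) ^ 2 = 0 := by
      rcases mul_eq_zero.mp h0 with h | h
      · exact absurd h (he j).ne'
      · exact h
    have hu0 : u (Sum.inr (Sum.inl j)) = 0 := pow_eq_zero_iff (by norm_num) |>.mp this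
    have : z₁ (Sum.inr (Sum.inl j)) - z₂ (Sum.inr (Sum.inl j)) = 0 := hu0
    linarith
end

section
/- Let M ∈ ℝ^{n×n} with n = n₁ + n₂ + n₃, and suppose its symmetric part M_s := (M + Mᵀ)/2 equals the block-diagonal matrix blockdiag(H_d, H_g, 0), where H_d ∈ ℝ^{n₁×n₁} and H_g ∈ ℝ^{n₂×n₂} are diagonal matrices with nonnegative diagonal entries. Then for any two solutions (z¹, π¹) and (z², π²) of the mixed linear complementarity problem MLCP(M, N, q, r), one has H_d z¹_d = H_d z²_d and H_g z¹_g = H_g z²_g, where z_d and z_g denote the first n₁ and next n₂ components of z, respectively; i.e., the weighted demand and weighted generation are unique across equilibria. -/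
open Matrix

/-- Suppose the symmetric part of `M` equals `blockdiag(H_d, H_g, 0)`, where
`H_d` and `H_g` are diagonal matrices with nonnegative diagonal entries.
Then for any two solutions of `MLCP(M, N, q, r)`, the weighted demand and
weighted generation are unique: `H_d z¹_d = H_d z²_d` and
`H_g z¹_g = H_g z²_g`. -/
theorem mlcp_unique_weighted_demand_generation {n₁ n₂ n₃ m : ℕ}
    (M : Matrix (Fin n₁ ⊕ (Fin n₂ ⊕ Fin n₃)) (Fin n₁ ⊕ (Fin n₂ ⊕ Fin n₃)) ℝ)
    (N : Matrix (Fin n₁ ⊕ (Fin n₂ ⊕ Fin n₃)) (Fin m) ℝ)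
    (q : Fin n₁ ⊕ (Fin n₂ ⊕ Fin n₃) → ℝ) (r : Fin m → ℝ)
    (d : Fin n₁ → ℝ) (e : Fin n₂ → ℝ)
    (hd : ∀ i, 0 ≤ d i) (he : ∀ i, 0 ≤ e i)
    (hMs : (2 : ℝ)⁻¹ • (M + M.transpose) =
      Matrix.fromBlocks (Matrix.diagonal d) 0 0
        (Matrix.fromBlocks (Matrix.diagonal e) 0 0 0))
    (z₁ z₂ : Fin n₁ ⊕ (Fin n₂ ⊕ Fin n₃) → ℝ) (π₁ π₂ : Fin m → ℝ)
    (h₁ : IsMLCPSolution M N q r z₁ π₁) (h₂ : IsMLCPSolution M N q r z₂ π₂) :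
    (Matrix.diagonal d).mulVec (fun i => z₁ (Sum.inl i)) =
        (Matrix.diagonal d).mulVec (fun i => z₂ (Sum.inl i)) ∧
      (Matrix.diagonal e).mulVec (fun i => z₁ (Sum.inr (Sum.inl i))) =
        (Matrix.diagonal e).mulVec (fun i => z₂ (Sum.inr (Sum.inl i))) := by
  obtain ⟨hz₁, hw₁, hc₁, hr₁⟩ := h₁
  obtain ⟨hz₂, hw₂, hc₂, hr₂⟩ := h₂
  set δ : Fin n₁ ⊕ (Fin n₂ ⊕ Fin n₃) → ℝ := z₁ - z₂ with hδ
  set w₁ := M.mulVec z₁ + N.mulVec π₁ + q with hw₁def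
  set w₂ := M.mulVec z₂ + N.mulVec π₂ + q with hw₂def
  -- nonnegativity of dot products
  have hdotnn : ∀ (a b : Fin n₁ ⊕ (Fin n₂ ⊕ Fin n₃) → ℝ),
      0 ≤ a → 0 ≤ b → 0 ≤ a ⬝ᵥ b := fun a b ha hb =>
    Finset.sum_nonneg fun i _ => mul_nonneg (ha i) (hb i)
  -- the key inequality δᵀ M δ ≤ 0
  have hNδ : N.transpose.mulVec δ = 0 := by
    simp [hδ, Matrix.mulVec_sub, hr₁, hr₂]
  have hπ : δ ⬝ᵥ N.mulVec (π₁ - π₂) = 0 := by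
    rw [Matrix.dotProduct_mulVec, ← Matrix.mulVec_transpose, hNδ]
    simp
  have hMδ : M.mulVec δ = w₁ - w₂ - N.mulVec (π₁ - π₂) := by
    simp only [hδ, hw₁def, hw₂def, Matrix.mulVec_sub]
    abel
  have key : δ ⬝ᵥ M.mulVec δ ≤ 0 := by
    rw [hMδ, dotProduct_sub, hπ, sub_zero, dotProduct_sub, hδ,
      sub_dotProduct, sub_dotProduct, hc₁, hc₂]
    have a1 : 0 ≤ z₂ ⬝ᵥ w₁ := hdotnn _ _ hz₂ hw₁
    have a2 : 0 ≤ z₁ ⬝ᵥ w₂ := hdotnn _ _ hz₁ hw₂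
    linarith
  -- quadratic form via symmetric part
  set B : Matrix (Fin n₁ ⊕ (Fin n₂ ⊕ Fin n₃)) (Fin n₁ ⊕ (Fin n₂ ⊕ Fin n₃)) ℝ :=
    Matrix.fromBlocks (Matrix.diagonal d) 0 0
        (Matrix.fromBlocks (Matrix.diagonal e) 0 0 0) with hB
  have hsym : δ ⬝ᵥ B.mulVec δ = δ ⬝ᵥ M.mulVec δ := by
    rw [← hMs]
    have hT : δ ⬝ᵥ M.transpose.mulVec δ = δ ⬝ᵥ M.mulVec δ := by
      rw [Matrix.dotProduct_mulVec, Matrix.vecMul_transpose, dotProduct_comm]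
    rw [Matrix.smul_mulVec, dotProduct_smul, Matrix.add_mulVec,
      dotProduct_add, hT, smul_eq_mul]
    ring
  have h1 : ∀ i, (B *ᵥ δ) (Sum.inl i) = d i * δ (Sum.inl i) := by
    intro i
    simp [hB, Matrix.mulVec, dotProduct, Fintype.sum_sum_type,
      Matrix.diagonal, Finset.sum_ite_eq, mul_comm]
  have h2 : ∀ i, (B *ᵥ δ) (Sum.inr (Sum.inl i)) = e i * δ (Sum.inr (Sum.inl i)) := by
    intro i
    simp [hB, Matrix.mulVec, dotProduct, Fintype.sum_sum_type,
      Matrix.diagonal, Finset.sum_ite_eq, mul_comm]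
  have h3 : ∀ i, (B *ᵥ δ) (Sum.inr (Sum.inr i)) = 0 := by
    intro i
    simp [hB, Matrix.mulVec, dotProduct, Fintype.sum_sum_type]
  have hquad : δ ⬝ᵥ B.mulVec δ =
      (∑ i, d i * δ (Sum.inl i) ^ 2) + ∑ i, e i * δ (Sum.inr (Sum.inl i)) ^ 2 := by
    simp only [dotProduct, Fintype.sum_sum_type, h1, h2, h3, mul_zero,
      Finset.sum_const_zero, add_zero]
    congr 1 <;> exact Finset.sum_congr rfl fun i _ => by ring
  -- the two sums are nonnegative and sum to ≤ 0, so each term is zero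
  have hS1nn : 0 ≤ ∑ i, d i * δ (Sum.inl i) ^ 2 :=
    Finset.sum_nonneg fun i _ => mul_nonneg (hd i) (sq_nonneg _)
  have hS2nn : 0 ≤ ∑ i, e i * δ (Sum.inr (Sum.inl i)) ^ 2 :=
    Finset.sum_nonneg fun i _ => mul_nonneg (he i) (sq_nonneg _)
  have hsum : (∑ i, d i * δ (Sum.inl i) ^ 2) +
      (∑ i, e i * δ (Sum.inr (Sum.inl i)) ^ 2) ≤ 0 := by
    rw [← hquad, hsym]; exact key
  have hS1 : ∑ i, d i * δ (Sum.inl i) ^ 2 = 0 := le_antisymm (by linarith) hS1nn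
  have hS2 : ∑ i, e i * δ (Sum.inr (Sum.inl i)) ^ 2 = 0 := le_antisymm (by linarith) hS2nn
  have hterm1 : ∀ i, d i * δ (Sum.inl i) = 0 := by
    intro i
    have := (Finset.sum_eq_zero_iff_of_nonneg
      (fun i _ => mul_nonneg (hd i) (sq_nonneg (δ (Sum.inl i))))).mp hS1 i
      (Finset.mem_univ i)
    rcases mul_eq_zero.mp this with h | h
    · simp [h]
    · simp [pow_eq_zero_iff, two_ne_zero] at h
      simp [h]
  have hterm2 : ∀ i, e i * δ (Sum.inr (Sum.inl i)) = 0 := by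
    intro i
    have := (Finset.sum_eq_zero_iff_of_nonneg
      (fun i _ => mul_nonneg (he i) (sq_nonneg (δ (Sum.inr (Sum.inl i)))))).mp hS2 i
      (Finset.mem_univ i)
    rcases mul_eq_zero.mp this with h | h
    · simp [h]
    · simp [pow_eq_zero_iff, two_ne_zero] at h
      simp [h]
  constructor
  · funext i
    rw [Matrix.mulVec_diagonal, Matrix.mulVec_diagonal]
    have := hterm1 i
    simp only [hδ, Pi.sub_apply, mul_sub] at this
    linarith
  · funext i
    rw [Matrix.mulVec_diagonal, Matrix.mulVec_diagonal]
    have := hterm2 i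
    simp only [hδ, Pi.sub_apply, mul_sub] at this
    linarith
end
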